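/- Let Π ⊊ Σ_k be a proper subshift and T : Π → Σ_k the map constructed from Π. If y, ỹ ∈ Π form a DC1 pair for (Σ_k, σ), then (T(y), T(ỹ)) is also a DC1 pair. Consequently, T maps any DC1-scrambled subset of Π to a DC1-scrambled subset of Σ_k. -/
import Mathlib


open Filter Topology MeasureTheory

/-- Upper density of a set of naturals. -/
noncomputable def upperDensity (S : Set ℕ) : ℝ :=
  Filter.limsup (fun n => ((S ∩ Set.Iio n).ncard : ℝ) / n) Filter.atTop

/-- Lower density of a set of naturals. -/
noncomputable def lowerDensity (S : Set ℕ) : ℝ :=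
  Filter.liminf (fun n => ((S ∩ Set.Iio n).ncard : ℝ) / n) Filter.atTop

/-- Banach upper density: limsup over the interval length of the maximal
proportion of `S` in an interval of that length. -/
noncomputable def banachUpperDensity (S : Set ℕ) : ℝ :=
  Filter.limsup (fun N => ⨆ a : ℕ, ((S ∩ Set.Ico a (a + N)).ncard : ℝ) / N) Filter.atTop

/-- Banach lower density. -/
noncomputable def banachLowerDensity (S : Set ℕ) : ℝ :=
  Filter.liminf (fun N => ⨅ a : ℕ, ((S ∩ Set.Ico a (a + N)).ncard : ℝ) / N) Filter.atTop

/-- The shift map on the full shift `Σ_k = {0, …, k-1}^ℕ`. -/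
def shift {k : ℕ} (x : ℕ → Fin k) : ℕ → Fin k := fun n => x (n + 1)

/-- The metric `d(x,y) = Σ_{n ≥ 1} δ(x_n, y_n)/2^n` on `Σ_k` (sequences indexed from `0`). -/
noncomputable def shiftDist {k : ℕ} (x y : ℕ → Fin k) : ℝ :=
  ∑' n : ℕ, if x n = y n then 0 else (1 / 2) ^ (n + 1)

/-- The open ball `B_ε(x)` for the metric `shiftDist`. -/
def sball {k : ℕ} (x : ℕ → Fin k) (ε : ℝ) : Set (ℕ → Fin k) := {y | shiftDist x y < ε}

/-- `N(x, U) = {n ≥ 1 : σ^n(x) ∈ U}`. -/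
def visits {k : ℕ} (x : ℕ → Fin k) (U : Set (ℕ → Fin k)) : Set ℕ :=
  {n | 1 ≤ n ∧ shift^[n] x ∈ U}

/-- A point is recurrent if `N(x, B_ε(x)) ≠ ∅` for every `ε > 0`. -/
def Recurrent {k : ℕ} (x : ℕ → Fin k) : Prop := ∀ ε > (0 : ℝ), (visits x (sball x ε)).Nonempty

/-- A point is Banach recurrent if `N(x, B_ε(x))` has positive Banach upper density
for every `ε > 0`. -/
def BanachRecurrent {k : ℕ} (x : ℕ → Fin k) : Prop :=
  ∀ ε > (0 : ℝ), 0 < banachUpperDensity (visits x (sball x ε))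

/-- Statistical ω-limit set w.r.t. a density notion `ξ`:
`ω_ξ(x) = {y : ξ(N(x, B_ε(y))) > 0 for all ε > 0}`. -/
def statOmega {k : ℕ} (ξ : Set ℕ → ℝ) (x : ℕ → Fin k) : Set (ℕ → Fin k) :=
  {y | ∀ ε > (0 : ℝ), 0 < ξ (visits x (sball y ε))}

/-- The usual ω-limit set of `x` under the shift. -/
def omegaLim {k : ℕ} (x : ℕ → Fin k) : Set (ℕ → Fin k) :=
  {y | ∀ ε > (0 : ℝ), ∀ N : ℕ, ∃ n ≥ N, shift^[n] x ∈ sball y ε}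

/-- Density of a subset of `Σ_k` w.r.t. the metric `shiftDist`. -/
def ShiftDense {k : ℕ} (A : Set (ℕ → Fin k)) : Prop :=
  ∀ x : ℕ → Fin k, ∀ ε > (0 : ℝ), ∃ y ∈ A, shiftDist x y < ε

/-- Closure of a subset of `Σ_k` w.r.t. the metric `shiftDist`. -/
def shiftClosure {k : ℕ} (A : Set (ℕ → Fin k)) : Set (ℕ → Fin k) :=
  {z | ∀ ε > (0 : ℝ), ∃ y ∈ A, shiftDist z y < ε}

/-- `Φ^{(n)}_{xy}(t)`: the proportion of times `0 ≤ i < n` with `d(σ^i x, σ^i y) < t`. -/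
noncomputable def PhiN {k : ℕ} (x y : ℕ → Fin k) (n : ℕ) (t : ℝ) : ℝ :=
  (({i | i < n ∧ shiftDist (shift^[i] x) (shift^[i] y) < t}).ncard : ℝ) / n

/-- A pair is DC1 (distributionally chaotic of type 1) if `Φ_{xy}(s) = 0` for some `s > 0`
and `Φ*_{xy}(t) = 1` for all `t > 0`. -/
def DC1Pair {k : ℕ} (x y : ℕ → Fin k) : Prop :=
  (∃ s > (0 : ℝ), Filter.liminf (fun n => PhiN x y n s) Filter.atTop = 0) ∧
  (∀ t > (0 : ℝ), Filter.limsup (fun n => PhiN x y n t) Filter.atTop = 1)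

/-- A set with at least two points is DC1-scrambled if every pair of distinct points is DC1. -/
def DC1Scrambled {k : ℕ} (S : Set (ℕ → Fin k)) : Prop :=
  S.Nontrivial ∧ ∀ x ∈ S, ∀ y ∈ S, x ≠ y → DC1Pair x y

/-- `strictOrEq true A B` means `A ⊊ B`; `strictOrEq false A B` means `A = B`. -/
def strictOrEq {α : Type*} (b : Bool) (A B : Set α) : Prop := if b then A ⊂ B else A = B

/-- The patterns of (strict ⊊ = `true` / equality = `false`) for the three inclusions
`ω_{B_*} ⊆ ω_{d̲} ⊆ ω_{d̄} ⊆ ω_{B*}` in Cases (1)–(6). -/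
def caseFlags : Fin 6 → Bool × Bool × Bool :=
  ![(true, false, false), (true, false, true), (false, true, false),
    (true, true, false), (false, true, true), (true, true, true)]

/-- `x` satisfies Case (i), i = 1,…,6: the chain
`ω_{B_*}(x) ⊆ ω_{d̲}(x) ⊆ ω_{d̄}(x) ⊆ ω_{B*}(x) = ω_σ(x)` with strictness pattern given by
`caseFlags i`, and the last inclusion an equality. -/
def SatCase {k : ℕ} (i : Fin 6) (x : ℕ → Fin k) : Prop :=
  strictOrEq (caseFlags i).1 (statOmega banachLowerDensity x) (statOmega lowerDensity x) ∧
  strictOrEq (caseFlags i).2.1 (statOmega lowerDensity x) (statOmega upperDensity x) ∧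
  strictOrEq (caseFlags i).2.2 (statOmega upperDensity x) (statOmega banachUpperDensity x) ∧
  statOmega banachUpperDensity x = omegaLim x

/-- `x` satisfies Case (i'), i = 1,…,6: as in Case (i) but the last inclusion
`ω_{B*}(x) ⊆ ω_σ(x)` is strict. -/
def SatCase' {k : ℕ} (i : Fin 6) (x : ℕ → Fin k) : Prop :=
  strictOrEq (caseFlags i).1 (statOmega banachLowerDensity x) (statOmega lowerDensity x) ∧
  strictOrEq (caseFlags i).2.1 (statOmega lowerDensity x) (statOmega upperDensity x) ∧
  strictOrEq (caseFlags i).2.2 (statOmega upperDensity x) (statOmega banachUpperDensity x) ∧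
  statOmega banachUpperDensity x ⊂ omegaLim x
/-- A subshift: a nonempty, closed (w.r.t. the metric `shiftDist`), shift-invariant subset. -/
def IsSubshift {k : ℕ} (P : Set (ℕ → Fin k)) : Prop :=
  P.Nonempty ∧ shiftClosure P ⊆ P ∧ ∀ x ∈ P, shift x ∈ P

/-- The first `n` symbols of `y` as a finite word. -/
def prefixWord {k : ℕ} (y : ℕ → Fin k) (n : ℕ) : List (Fin k) :=
  List.ofFn (fun i : Fin n => y i)

/-- A finite word occurs in (the language of) `P` if it is the initial word of
some point of `P`. -/
def IsWordIn {k : ℕ} (w : List (Fin k)) (P : Set (ℕ → Fin k)) : Prop :=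
  ∃ x ∈ P, ∀ i : Fin w.length, x i = w.get i

/-- Data for the construction of the map `T`: an enumeration `C` of all (nonempty) finite
words of the subshift `P`, and a nonempty finite word `A1` not occurring in `P`. -/
structure TData (k : ℕ) (P : Set (ℕ → Fin k)) where
  C : ℕ → List (Fin k)
  A1 : List (Fin k)
  A1_ne : A1 ≠ []
  A1_not : ¬ IsWordIn A1 P
  C_in : ∀ n, IsWordIn (C n) P
  C_surj : ∀ w : List (Fin k), w ≠ [] → IsWordIn w P → ∃ n, C n = w

/-- The words `A_n` of the construction (indexed from `0`, so `TData.A y 0` is the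
paper's `A_1`): `A_{n+1} = A_n B_n A_n`, where `B_n = C_n Y_n ⋯ Y_n` consists of the
word `C_n` followed by `|A_n|²` copies of the initial word `Y_n` of `y` (paper's `Y_n`,
of length `n`, is `prefixWord y (n+1)` in our `0`-based indexing). -/
def TData.A {k : ℕ} {P : Set (ℕ → Fin k)} (D : TData k P) (y : ℕ → Fin k) :
    ℕ → List (Fin k)
  | 0 => D.A1
  | n + 1 =>
      D.A y n ++
        (D.C n ++ (List.replicate ((D.A y n).length ^ 2) (prefixWord y (n + 1))).flatten) ++
        D.A y n

/-- The requirement `|C_n| = o(|A_n|)` as `n → ∞`. -/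
def TData.Small {k : ℕ} {P : Set (ℕ → Fin k)} (D : TData k P) : Prop :=
  ∀ y : ℕ → Fin k,
    Filter.Tendsto (fun n => ((D.C n).length : ℝ) / ((D.A y n).length))
      Filter.atTop (nhds 0)

/-- The map `T`: `T(y) = lim_n A_n` is the sequence whose `i`-th symbol is the `i`-th
symbol of `A_n` for every large `n` (the words `A_n` are nested prefixes of each other,
and `|A_{i+1}| > i`, so the `i`-th symbol of `A_{i+1}` is well defined). -/
def TData.T {k : ℕ} {P : Set (ℕ → Fin k)} (D : TData k P) (y : ℕ → Fin k) : ℕ → Fin k :=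
  fun i => if h : i < (D.A y (i + 1)).length then (D.A y (i + 1)).get ⟨i, h⟩ else y i


section Aux

open Filter Topology

/-! ### Metric lemmas -/

lemma hgeo : Summable (fun n : ℕ => ((1:ℝ)/2) ^ (n + 1)) :=
  Summable.comp_injective summable_geometric_two (add_left_injective 1)

lemma summable_d {k : ℕ} (x y : ℕ → Fin k) :
    Summable (fun n => if x n = y n then (0:ℝ) else (1 / 2) ^ (n + 1)) := by
  apply Summable.of_nonneg_of_le (fun n => ?_) (fun n => ?_) hgeo
  · split <;> positivity
  · split
    · positivity
    · exact le_rfl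

lemma sd_nonneg {k : ℕ} (x y : ℕ → Fin k) : 0 ≤ shiftDist x y :=
  tsum_nonneg (fun n => by split <;> positivity)

lemma sd_self {k : ℕ} (x : ℕ → Fin k) : shiftDist x x = 0 := by
  unfold shiftDist; simp

lemma tail_geo (L : ℕ) : ∑' i : ℕ, ((1:ℝ)/2) ^ (i + L + 1) = (1/2) ^ L := by
  have : ∀ i : ℕ, ((1:ℝ)/2) ^ (i + L + 1) = ((1/2)^(L+1)) * (1/2)^i := fun i => by
    rw [← pow_add]; ring_nf
  rw [tsum_congr this, tsum_mul_left, tsum_geometric_two, pow_succ]; ring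

set_option maxHeartbeats 1000000 in
lemma sd_le_of_agree {k : ℕ} {x y : ℕ → Fin k} {L : ℕ} (h : ∀ j < L, x j = y j) :
    shiftDist x y ≤ (1/2) ^ L := by
  have hs := summable_d x y
  rw [shiftDist, ← Summable.sum_add_tsum_nat_add L hs]
  have h1 : ∑ i ∈ Finset.range L, (if x i = y i then (0:ℝ) else (1 / 2) ^ (i + 1)) = 0 := by
    apply Finset.sum_eq_zero
    intro i hi
    simp [h i (Finset.mem_range.mp hi)]
  rw [h1, zero_add]
  have h2 : ∑' i : ℕ, (if x (i + L) = y (i + L) then (0:ℝ) else (1 / 2) ^ (i + L + 1))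
      ≤ ∑' i : ℕ, ((1:ℝ)/2) ^ (i + L + 1) := by
    refine Summable.tsum_le_tsum (fun i => ?_) ((summable_nat_add_iff L).mpr hs)
      ((summable_nat_add_iff L).mpr hgeo)
    split
    · positivity
    · exact le_rfl
  exact h2.trans_eq (tail_geo L)

lemma sd_ge_of_ne {k : ℕ} {x y : ℕ → Fin k} {L j : ℕ} (hj : j < L) (h : x j ≠ y j) :
    (1/2:ℝ) ^ L ≤ shiftDist x y := by
  have hs := summable_d x y
  calc (1/2:ℝ)^L ≤ (1/2)^(j+1) :=
        pow_le_pow_of_le_one (by norm_num) (by norm_num) hj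
    _ = (if x j = y j then (0:ℝ) else (1 / 2) ^ (j + 1)) := by simp [h]
    _ ≤ shiftDist x y := Summable.le_tsum hs j (fun i _ => by split <;> positivity)

/-- If the distance is `< (1/2)^L` then the first `L` symbols agree. -/
lemma agree_of_sd_lt {k : ℕ} {x y : ℕ → Fin k} {L : ℕ}
    (h : shiftDist x y < (1/2) ^ L) : ∀ j < L, x j = y j := by
  intro j hj
  by_contra hne
  exact absurd (sd_ge_of_ne hj hne) (not_le.mpr h)

/-- If the distance is `≥ s > (1/2)^L` then some of the first `L` symbols disagree. -/
lemma ne_of_sd_ge {k : ℕ} {x y : ℕ → Fin k} {L : ℕ} {s : ℝ}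
    (hL : (1/2:ℝ)^L < s) (h : ¬ shiftDist x y < s) : ∃ j < L, x j ≠ y j := by
  by_contra hag
  push_neg at hag
  exact h (lt_of_le_of_lt (sd_le_of_agree hag) hL)

/-! ### Shift iteration -/

lemma shift_iter {k : ℕ} (x : ℕ → Fin k) (p j : ℕ) : shift^[p] x j = x (j + p) := by
  induction p generalizing x with
  | zero => rfl
  | succ p ih =>
    rw [Function.iterate_succ_apply, ih]
    rfl

/-! ### Lengths and prefixes of the words `A_n` -/

lemma prefixWord_length {k : ℕ} (y : ℕ → Fin k) (n : ℕ) : (prefixWord y n).length = n := by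
  simp [prefixWord]

lemma prefixWord_getElem {k : ℕ} (y : ℕ → Fin k) (n i : ℕ) (h : i < n) :
    (prefixWord y n)[i]'(by rw [prefixWord_length]; exact h) = y i := by
  simp [prefixWord]

lemma flatten_replicate_length {α : Type*} (K : ℕ) (l : List α) :
    (List.replicate K l).flatten.length = K * l.length := by
  simp [List.length_flatten, List.map_replicate, List.sum_replicate, smul_eq_mul]

lemma flatten_replicate_getElem {α : Type*} (K : ℕ) (l : List α) (hl : 0 < l.length)
    (m : ℕ) (hm : m < K * l.length) :
    (List.replicate K l).flatten[m]'(by rw [flatten_replicate_length]; exact hm)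
      = l[m % l.length]'(Nat.mod_lt _ hl) := by
  induction K generalizing m with
  | zero => omega
  | succ K ih =>
    have e : (List.replicate (K+1) l).flatten = l ++ (List.replicate K l).flatten := by
      rw [List.replicate_succ, List.flatten_cons]
    rw [List.getElem_of_eq e]
    by_cases h : m < l.length
    · rw [List.getElem_append_left h]
      congr 1
      exact (Nat.mod_eq_of_lt h).symm
    · push_neg at h
      rw [List.getElem_append_right h]
      have hm' : m - l.length < K * l.length := by
        rw [Nat.succ_mul] at hm; omega
      rw [ih (m - l.length) hm']
      congr 1
      rw [Nat.mod_eq_sub_mod h]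

variable {k : ℕ} {P : Set (ℕ → Fin k)} (D : TData k P)

lemma lenA_succ (y : ℕ → Fin k) (n : ℕ) :
    (D.A y (n+1)).length
      = (D.A y n).length + ((D.C n).length + (D.A y n).length^2 * (n+1))
          + (D.A y n).length := by
  show (D.A y n ++ (D.C n ++ (List.replicate ((D.A y n).length ^ 2)
      (prefixWord y (n + 1))).flatten) ++ D.A y n).length = _
  rw [List.length_append, List.length_append, List.length_append,
    flatten_replicate_length, prefixWord_length]

lemma lenA_pos (y : ℕ → Fin k) (n : ℕ) : 0 < (D.A y n).length := by
  induction n with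
  | zero => exact List.length_pos_iff.mpr D.A1_ne
  | succ n ih => rw [lenA_succ]; omega

lemma lenA_eq (y y' : ℕ → Fin k) (n : ℕ) : (D.A y n).length = (D.A y' n).length := by
  induction n with
  | zero => rfl
  | succ n ih => rw [lenA_succ, lenA_succ, ih]

lemma lenA_ge (y : ℕ → Fin k) (n : ℕ) : n + 1 ≤ (D.A y (n+1)).length := by
  have h1 := lenA_pos D y n
  have h2 : 1 * (n+1) ≤ (D.A y n).length^2 * (n+1) :=
    Nat.mul_le_mul_right _ (by nlinarith)
  rw [lenA_succ]
  omega

lemma lenA_ge' (y : ℕ → Fin k) (n : ℕ) : n ≤ (D.A y n).length := by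
  cases n with
  | zero => exact Nat.zero_le _
  | succ n => exact lenA_ge D y n

lemma A_prefix_succ (y : ℕ → Fin k) (n : ℕ) : D.A y n <+: D.A y (n+1) :=
  ⟨(D.C n ++ (List.replicate ((D.A y n).length ^ 2) (prefixWord y (n + 1))).flatten)
      ++ D.A y n, by
    show _ = D.A y n ++ (D.C n ++ (List.replicate ((D.A y n).length ^ 2)
        (prefixWord y (n + 1))).flatten) ++ D.A y n
    simp [List.append_assoc]⟩

lemma A_prefix_le (y : ℕ → Fin k) {n m : ℕ} (h : n ≤ m) : D.A y n <+: D.A y m := by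
  induction m with
  | zero => rw [Nat.le_zero.mp h]
  | succ m ih =>
    by_cases h' : n = m + 1
    · rw [h']
    · exact (ih (by omega)).trans (A_prefix_succ D y m)

lemma T_agree (y : ℕ → Fin k) (n i : ℕ) (hi : i < (D.A y n).length) :
    D.T y i = (D.A y n)[i] := by
  have hi1 : i < (D.A y (i+1)).length := lt_of_lt_of_le (Nat.lt_succ_self i) (lenA_ge D y i)
  show (if h : i < (D.A y (i + 1)).length then (D.A y (i + 1)).get ⟨i, h⟩ else y i) = _
  rw [dif_pos hi1]
  show (D.A y (i+1))[i] = (D.A y n)[i]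
  rcases le_total n (i+1) with h | h
  · exact (List.IsPrefix.getElem (A_prefix_le D y h) hi).symm
  · exact List.IsPrefix.getElem (A_prefix_le D y h) hi1

lemma getElem_append_mid {α : Type*} (l₁ l₂ : List α) (i : ℕ) (h : i < l₂.length) :
    (l₁ ++ l₂)[l₁.length + i]'(by rw [List.length_append]; omega) = l₂[i] := by
  rw [List.getElem_append_right (Nat.le_add_right _ _)]
  simp

lemma T_run (y : ℕ → Fin k) (n m : ℕ) (hm : m < (D.A y n).length^2 * (n+1)) :
    D.T y ((D.A y n).length + ((D.C n).length + m)) = y (m % (n+1)) := by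
  have hq : 0 < n+1 := Nat.succ_pos n
  have hi : (D.A y n).length + ((D.C n).length + m) < (D.A y (n+1)).length := by
    rw [lenA_succ]; omega
  rw [T_agree D y (n+1) _ hi]
  have e : D.A y (n+1) = D.A y n ++ (D.C n
      ++ ((List.replicate ((D.A y n).length ^ 2) (prefixWord y (n + 1))).flatten
        ++ D.A y n)) := by
    show D.A y n ++ (D.C n ++ (List.replicate ((D.A y n).length ^ 2)
        (prefixWord y (n + 1))).flatten) ++ D.A y n = _
    simp [List.append_assoc]
  rw [List.getElem_of_eq e]
  have hin : (D.C n).length + m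
      < (D.C n ++ ((List.replicate ((D.A y n).length ^ 2) (prefixWord y (n + 1))).flatten
          ++ D.A y n)).length := by
    rw [List.length_append, List.length_append, flatten_replicate_length, prefixWord_length]
    omega
  rw [getElem_append_mid _ _ _ hin]
  have hin2 : m < ((List.replicate ((D.A y n).length ^ 2) (prefixWord y (n + 1))).flatten
      ++ D.A y n).length := by
    rw [List.length_append, flatten_replicate_length, prefixWord_length]
    omega
  rw [getElem_append_mid _ _ _ hin2]
  have hm' : m < (D.A y n).length ^ 2 * (prefixWord y (n+1)).length := by
    rw [prefixWord_length]; exact hm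
  rw [List.getElem_append_left (by rw [flatten_replicate_length]; exact hm'),
    flatten_replicate_getElem _ _ (by rw [prefixWord_length]; omega) _ hm',
    prefixWord_getElem]
  · congr 1
    rw [prefixWord_length]
  · rw [prefixWord_length]
    exact Nat.mod_lt _ hq

end Aux

section Transfer

open Filter Topology

variable {k : ℕ} {P : Set (ℕ → Fin k)} (D : TData k P)

lemma run_symbol (y : ℕ → Fin k) (n m j : ℕ) (h : m + j < (D.A y n).length^2*(n+1)) :
    shift^[(D.A y n).length + ((D.C n).length + m)] (D.T y) j = y ((m + j) % (n+1)) := by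
  rw [shift_iter]
  have e : j + ((D.A y n).length + ((D.C n).length + m))
      = (D.A y n).length + ((D.C n).length + (m + j)) := by omega
  rw [e, T_run D y n (m+j) h]

lemma mod_window (q m j : ℕ) (hj : m % q + j < q) : (m + j) % q = m % q + j := by
  have hjq : j % q = j := Nat.mod_eq_of_lt (by omega)
  rw [Nat.add_mod, hjq, Nat.mod_eq_of_lt hj]

lemma close_transfer (y y' : ℕ → Fin k) (n L m : ℕ)
    (hq : m % (n+1) + L ≤ n+1) (hm : m + L ≤ (D.A y n).length^2*(n+1))
    (hag : ∀ j < L, y (m % (n+1) + j) = y' (m % (n+1) + j)) :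
    shiftDist (shift^[(D.A y n).length + ((D.C n).length + m)] (D.T y))
      (shift^[(D.A y n).length + ((D.C n).length + m)] (D.T y')) ≤ (1/2)^L := by
  have e := lenA_eq D y y' n
  apply sd_le_of_agree
  intro j hj
  have h1 : m + j < (D.A y n).length^2*(n+1) := by omega
  have h1' : m + j < (D.A y' n).length^2*(n+1) := by rw [← e]; exact h1
  have h2 := run_symbol D y' n m j h1'
  rw [← e] at h2
  rw [run_symbol D y n m j h1, h2, mod_window (n+1) m j (by omega)]
  exact hag j hj

lemma far_transfer (y y' : ℕ → Fin k) (n L m : ℕ)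
    (hq : m % (n+1) + L ≤ n+1) (hm : m + L ≤ (D.A y n).length^2*(n+1))
    (hne : ∃ j < L, y (m % (n+1) + j) ≠ y' (m % (n+1) + j)) :
    (1/2:ℝ)^L ≤ shiftDist (shift^[(D.A y n).length + ((D.C n).length + m)] (D.T y))
      (shift^[(D.A y n).length + ((D.C n).length + m)] (D.T y')) := by
  obtain ⟨j, hj, hne⟩ := hne
  have e := lenA_eq D y y' n
  apply sd_ge_of_ne hj
  have h1 : m + j < (D.A y n).length^2*(n+1) := by omega
  have h1' : m + j < (D.A y' n).length^2*(n+1) := by rw [← e]; exact h1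
  have h2 := run_symbol D y' n m j h1'
  rw [← e] at h2
  rw [run_symbol D y n m j h1, h2, mod_window (n+1) m j (by omega)]
  exact hne

end Transfer

section Counting

open Filter Topology

open Classical in
/-- The set of hitting times up to `N`. -/
noncomputable def hitSet {k : ℕ} (x x' : ℕ → Fin k) (N : ℕ) (t : ℝ) : Finset ℕ :=
  (Finset.range N).filter (fun i => shiftDist (shift^[i] x) (shift^[i] x') < t)

lemma mem_hitSet {k : ℕ} {x x' : ℕ → Fin k} {N : ℕ} {t : ℝ} {i : ℕ} :
    i ∈ hitSet x x' N t ↔ i < N ∧ shiftDist (shift^[i] x) (shift^[i] x') < t := by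
  classical
  simp [hitSet]

lemma PhiN_eq {k : ℕ} (x x' : ℕ → Fin k) (N : ℕ) (t : ℝ) :
    PhiN x x' N t = ((hitSet x x' N t).card : ℝ) / N := by
  unfold PhiN
  congr 2
  rw [← Set.ncard_coe_finset]
  congr 1
  ext i
  simp [mem_hitSet]

lemma PhiN_nonneg {k : ℕ} (x x' : ℕ → Fin k) (N : ℕ) (t : ℝ) : 0 ≤ PhiN x x' N t := by
  rw [PhiN_eq]; positivity

lemma hitSet_card_le {k : ℕ} (x x' : ℕ → Fin k) (N : ℕ) (t : ℝ) :
    (hitSet x x' N t).card ≤ N := by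
  classical
  calc (hitSet x x' N t).card ≤ (Finset.range N).card := by
        apply Finset.card_le_card
        intro i hi
        exact Finset.mem_range.mpr (mem_hitSet.mp hi).1
    _ = N := Finset.card_range N

lemma PhiN_le_one {k : ℕ} (x x' : ℕ → Fin k) (N : ℕ) (t : ℝ) : PhiN x x' N t ≤ 1 := by
  rw [PhiN_eq]
  rcases Nat.eq_zero_or_pos N with h | h
  · simp [h]
  · rw [div_le_one (by positivity)]
    exact_mod_cast hitSet_card_le x x' N t

lemma PhiN_bddBelow {k : ℕ} (x x' : ℕ → Fin k) (t : ℝ) :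
    Filter.IsBoundedUnder (· ≥ ·) Filter.atTop (fun N : ℕ => PhiN x x' N t) :=
  Filter.isBoundedUnder_of ⟨0, fun N => PhiN_nonneg x x' N t⟩

lemma PhiN_bddAbove {k : ℕ} (x x' : ℕ → Fin k) (t : ℝ) :
    Filter.IsBoundedUnder (· ≤ ·) Filter.atTop (fun N : ℕ => PhiN x x' N t) :=
  Filter.isBoundedUnder_of ⟨1, fun N => PhiN_le_one x x' N t⟩

open Classical in
lemma mod_count_le (K q : ℕ) (hq : 0 < q) (S : Finset ℕ) :
    ((Finset.range (K*q)).filter (fun m => m % q ∈ S)).card ≤ K * S.card := by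
  have hsub : ((Finset.range (K*q)).filter (fun m => m % q ∈ S))
      ⊆ (Finset.range K ×ˢ S).image (fun p => q * p.1 + p.2) := by
    intro m hm
    rw [Finset.mem_filter, Finset.mem_range] at hm
    apply Finset.mem_image.mpr
    refine ⟨(m / q, m % q), ?_, Nat.div_add_mod m q⟩
    rw [Finset.mem_product, Finset.mem_range]
    exact ⟨Nat.div_lt_of_lt_mul (by rw [mul_comm]; exact hm.1), hm.2⟩
  calc ((Finset.range (K*q)).filter (fun m => m % q ∈ S)).card
      ≤ ((Finset.range K ×ˢ S).image (fun p => q * p.1 + p.2)).card :=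
        Finset.card_le_card hsub
    _ ≤ (Finset.range K ×ˢ S).card := Finset.card_image_le
    _ = K * S.card := by rw [Finset.card_product, Finset.card_range]

open Classical in
lemma mod_count_ge (J q : ℕ) (hq : 0 < q) (S : Finset ℕ) (hS : S ⊆ Finset.range q) :
    J * S.card ≤ ((Finset.range (J*q)).filter (fun m => m % q ∈ S)).card := by
  have hsub : (Finset.range J ×ˢ S).image (fun p => q * p.1 + p.2)
      ⊆ (Finset.range (J*q)).filter (fun m => m % q ∈ S) := by
    intro m hm
    obtain ⟨⟨w, r⟩, hwr, rfl⟩ := Finset.mem_image.mp hm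
    rw [Finset.mem_product, Finset.mem_range] at hwr
    obtain ⟨hw, hr⟩ := hwr
    have hrq : r < q := Finset.mem_range.mp (hS hr)
    rw [Finset.mem_filter, Finset.mem_range]
    constructor
    · calc q * w + r < q * w + q := by omega
        _ = q * (w + 1) := by ring
        _ ≤ q * J := Nat.mul_le_mul_left q hw
        _ = J * q := mul_comm q J
    · rw [Nat.mul_add_mod, Nat.mod_eq_of_lt hrq]
      exact hr
  have hinj : Set.InjOn (fun p : ℕ × ℕ => q * p.1 + p.2) ↑(Finset.range J ×ˢ S) := by
    intro p hp p' hp' h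
    rw [Finset.mem_coe, Finset.mem_product] at hp hp'
    simp only at h
    have hpq : p.2 < q := Finset.mem_range.mp (hS hp.2)
    have hpq' : p'.2 < q := Finset.mem_range.mp (hS hp'.2)
    have h2 : p.2 = p'.2 := by
      have e1 : p.2 = (q * p.1 + p.2) % q := by rw [Nat.mul_add_mod, Nat.mod_eq_of_lt hpq]
      have e2 : p'.2 = (q * p'.1 + p'.2) % q := by rw [Nat.mul_add_mod, Nat.mod_eq_of_lt hpq']
      rw [e1, e2, h]
    have h1 : p.1 = p'.1 := by
      have : q * p.1 = q * p'.1 := by omega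
      exact Nat.eq_of_mul_eq_mul_left hq this
    exact Prod.ext h1 h2
  calc J * S.card = (Finset.range J ×ˢ S).card := by rw [Finset.card_product, Finset.card_range]
    _ = ((Finset.range J ×ˢ S).image (fun p => q * p.1 + p.2)).card :=
        (Finset.card_image_of_injOn hinj).symm
    _ ≤ _ := Finset.card_le_card hsub

end Counting

section Stage

open Filter Topology

variable {k : ℕ} {P : Set (ℕ → Fin k)} (D : TData k P)

open Classical in
lemma stage_upper (y y' : ℕ → Fin k) (n L : ℕ) (s : ℝ) (hLs : (1/2:ℝ)^L < s) :
    (hitSet (D.T y) (D.T y')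
        ((D.A y n).length + ((D.C n).length + (D.A y n).length^2*(n+1))) ((1/2)^L)).card
      ≤ ((D.A y n).length + (D.C n).length) + L
        + (D.A y n).length^2 * ((hitSet y y' (n+1) s).card + L) := by
  classical
  set a := (D.A y n).length with ha
  set c := (D.C n).length with hc
  set q := n + 1 with hqdef
  set K := a^2 with hK
  set G := hitSet y y' q s with hG
  set B := G ∪ Finset.Ico (q - L) q with hB
  have hq : 0 < q := Nat.succ_pos n
  have hsub : hitSet (D.T y) (D.T y') (a + (c + K*q)) ((1/2)^L)
      ⊆ ((Finset.range (a + c)) ∪ ((Finset.Ico (K*q - L) (K*q)).image (fun m => a + (c + m))))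
        ∪ (((Finset.range (K*q)).filter (fun m => m % q ∈ B)).image (fun m => a + (c + m))) := by
    intro p hp
    rw [mem_hitSet] at hp
    obtain ⟨hpN, hpd⟩ := hp
    by_cases hpb : p < a + c
    · exact Finset.mem_union_left _ (Finset.mem_union_left _ (Finset.mem_range.mpr hpb))
    push_neg at hpb
    set m := p - (a + c) with hm
    have hpm : p = a + (c + m) := by omega
    have hmK : m < K*q := by omega
    by_cases htail : K*q < m + L
    · apply Finset.mem_union_left
      apply Finset.mem_union_right
      exact Finset.mem_image.mpr ⟨m, Finset.mem_Ico.mpr ⟨by omega, hmK⟩, hpm.symm⟩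
    push_neg at htail
    apply Finset.mem_union_right
    apply Finset.mem_image.mpr
    refine ⟨m, ?_, hpm.symm⟩
    rw [Finset.mem_filter, Finset.mem_range]
    refine ⟨hmK, ?_⟩
    by_cases hr : q < m % q + L
    · rw [hB]
      apply Finset.mem_union_right
      exact Finset.mem_Ico.mpr ⟨by omega, Nat.mod_lt _ hq⟩
    push_neg at hr
    rw [hB]
    apply Finset.mem_union_left
    rw [hG, mem_hitSet]
    refine ⟨Nat.mod_lt _ hq, ?_⟩
    by_contra hfar
    have hne : ∃ j < L, y (m % q + j) ≠ y' (m % q + j) := by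
      obtain ⟨j, hj, hnej⟩ := ne_of_sd_ge hLs hfar
      rw [shift_iter, shift_iter] at hnej
      refine ⟨j, hj, ?_⟩
      rw [Nat.add_comm]
      exact hnej
    have hfar2 := far_transfer D y y' n L m hr htail hne
    rw [hpm] at hpd
    exact absurd hpd (not_lt.mpr hfar2)
  calc (hitSet (D.T y) (D.T y') (a + (c + K*q)) ((1/2)^L)).card
      ≤ (((Finset.range (a + c)) ∪ ((Finset.Ico (K*q - L) (K*q)).image (fun m => a + (c + m))))
        ∪ (((Finset.range (K*q)).filter (fun m => m % q ∈ B)).image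
            (fun m => a + (c + m)))).card := Finset.card_le_card hsub
    _ ≤ ((Finset.range (a + c)).card
          + ((Finset.Ico (K*q - L) (K*q)).image (fun m => a + (c + m))).card)
        + (((Finset.range (K*q)).filter (fun m => m % q ∈ B)).image
            (fun m => a + (c + m))).card :=
        le_trans (Finset.card_union_le _ _) (by
          gcongr
          exact Finset.card_union_le _ _)
    _ ≤ (a + c) + L + K * (G.card + L) := by
        have h1 : (Finset.range (a + c)).card = a + c := Finset.card_range _
        have h2 : ((Finset.Ico (K*q - L) (K*q)).image (fun m => a + (c + m))).card ≤ L := by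
          calc _ ≤ (Finset.Ico (K*q - L) (K*q)).card := Finset.card_image_le
            _ ≤ L := by rw [Nat.card_Ico]; omega
        have h3 : (((Finset.range (K*q)).filter (fun m => m % q ∈ B)).image
            (fun m => a + (c + m))).card ≤ K * (G.card + L) := by
          calc _ ≤ ((Finset.range (K*q)).filter (fun m => m % q ∈ B)).card :=
                Finset.card_image_le
            _ ≤ K * B.card := mod_count_le K q hq B
            _ ≤ K * (G.card + L) := by
                apply Nat.mul_le_mul_left
                calc B.card ≤ G.card + (Finset.Ico (q - L) q).card := Finset.card_union_le _ _
                  _ ≤ G.card + L := by rw [Nat.card_Ico]; omega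
        omega

open Classical in
lemma stage_lower (y y' : ℕ → Fin k) (n L : ℕ) (t : ℝ) (hLt : (1/2:ℝ)^L < t) :
    ((D.A y n).length^2 - 1) * ((Finset.range (n+1 - L)).filter
        (fun r => shiftDist (shift^[r] y) (shift^[r] y') < (1/2)^L)).card
      ≤ (hitSet (D.T y) (D.T y')
          ((D.A y n).length + ((D.C n).length + (D.A y n).length^2*(n+1))) t).card := by
  classical
  set a := (D.A y n).length with ha
  set c := (D.C n).length with hc
  set q := n + 1 with hqdef
  set K := a^2 with hK
  set G' := (Finset.range (q - L)).filter
      (fun r => shiftDist (shift^[r] y) (shift^[r] y') < (1/2)^L) with hG'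
  have hq : 0 < q := Nat.succ_pos n
  have ha1 : 1 ≤ a := lenA_pos D y n
  have hK1 : 1 ≤ K := Nat.one_le_pow _ _ ha1
  have hG'q : G' ⊆ Finset.range q := by
    intro r hr
    rw [hG', Finset.mem_filter, Finset.mem_range] at hr
    exact Finset.mem_range.mpr (by omega)
  have hsub : ((Finset.range ((K-1)*q)).filter (fun m => m % q ∈ G')).image
      (fun m => a + (c + m)) ⊆ hitSet (D.T y) (D.T y') (a + (c + K*q)) t := by
    intro p hp
    obtain ⟨m, hm, rfl⟩ := Finset.mem_image.mp hp
    rw [Finset.mem_filter, Finset.mem_range] at hm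
    obtain ⟨hmJ, hmr⟩ := hm
    rw [hG', Finset.mem_filter, Finset.mem_range] at hmr
    obtain ⟨hrq, hrd⟩ := hmr
    have hLq : L < q := by omega
    have hKq : (K-1)*q + q = K*q := by
      calc (K-1)*q + q = (K-1+1)*q := by ring
        _ = K*q := by rw [Nat.sub_add_cancel hK1]
    have hmK : m + L ≤ K*q := by omega
    have hrL : m % q + L ≤ q := by omega
    rw [mem_hitSet]
    constructor
    · omega
    · have hag : ∀ j < L, y (m % q + j) = y' (m % q + j) := by
        intro j hj
        have := agree_of_sd_lt hrd j hj
        rw [shift_iter, shift_iter] at this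
        rw [Nat.add_comm]
        exact this
      have := close_transfer D y y' n L m hrL hmK hag
      exact lt_of_le_of_lt this hLt
  calc (K - 1) * G'.card
      ≤ ((Finset.range ((K-1)*q)).filter (fun m => m % q ∈ G')).card :=
        mod_count_ge (K-1) q hq G' hG'q
    _ = (((Finset.range ((K-1)*q)).filter (fun m => m % q ∈ G')).image
          (fun m => a + (c + m))).card :=
        (Finset.card_image_of_injective _ (fun m₁ m₂ h => by omega)).symm
    _ ≤ _ := Finset.card_le_card hsub

open Classical in
lemma G_card_le (y y' : ℕ → Fin k) (q L : ℕ) (t' : ℝ) :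
    (hitSet y y' q t').card ≤ ((Finset.range (q - L)).filter
        (fun r => shiftDist (shift^[r] y) (shift^[r] y') < t')).card + L := by
  classical
  have hsub : hitSet y y' q t' ⊆ ((Finset.range (q - L)).filter
      (fun r => shiftDist (shift^[r] y) (shift^[r] y') < t')) ∪ Finset.Ico (q - L) q := by
    intro r hr
    rw [mem_hitSet] at hr
    by_cases h : r < q - L
    · exact Finset.mem_union_left _ (Finset.mem_filter.mpr ⟨Finset.mem_range.mpr h, hr.2⟩)
    · exact Finset.mem_union_right _ (Finset.mem_Ico.mpr ⟨by omega, hr.1⟩)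
  calc (hitSet y y' q t').card ≤ _ := Finset.card_le_card hsub
    _ ≤ _ + (Finset.Ico (q - L) q).card := Finset.card_union_le _ _
    _ ≤ _ + L := by rw [Nat.card_Ico]; omega

end Stage

section Key

open Filter Topology

variable {k : ℕ} {P : Set (ℕ → Fin k)} (D : TData k P)

lemma ev_c_le_a (hD : D.Small) (y : ℕ → Fin k) :
    ∀ᶠ n in Filter.atTop, (D.C n).length ≤ (D.A y n).length := by
  have h1 : ∀ᶠ n in Filter.atTop, ((D.C n).length:ℝ)/((D.A y n).length) < 1 :=
    (hD y).eventually_lt_const one_pos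
  filter_upwards [h1] with n h1n
  have ha : (0:ℝ) < ((D.A y n).length : ℝ) := by exact_mod_cast lenA_pos D y n
  rw [div_lt_one ha] at h1n
  exact_mod_cast h1n.le

set_option maxHeartbeats 2000000 in
lemma keyA (hD : D.Small) (y y' : ℕ → Fin k) (s : ℝ) (hs : 0 < s)
    (hlim : Filter.liminf (fun n => PhiN y y' n s) Filter.atTop = 0) :
    ∃ s' > (0:ℝ), Filter.liminf (fun n => PhiN (D.T y) (D.T y') n s') Filter.atTop = 0 := by
  obtain ⟨L, hLs⟩ := exists_pow_lt_of_lt_one hs (by norm_num : (1/2:ℝ) < 1)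
  refine ⟨(1/2)^L, by positivity, ?_⟩
  have hge : (0:ℝ) ≤ Filter.liminf (fun N => PhiN (D.T y) (D.T y') N ((1/2)^L)) Filter.atTop :=
    le_liminf_of_le ((PhiN_bddAbove _ _ _).isCoboundedUnder_ge)
      (Filter.Eventually.of_forall (fun N => PhiN_nonneg _ _ _ _))
  have hle : ∀ ε > (0:ℝ),
      Filter.liminf (fun N => PhiN (D.T y) (D.T y') N ((1/2)^L)) Filter.atTop ≤ ε := by
    intro ε hε
    apply liminf_le_of_frequently_le _ (PhiN_bddBelow _ _ _)
    rw [Filter.frequently_atTop]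
    intro M
    have hfreq : ∃ᶠ m in Filter.atTop, PhiN y y' m s < ε/4 := by
      apply frequently_lt_of_liminf_lt ((PhiN_bddAbove y y' s).isCoboundedUnder_ge)
      rw [hlim]
      linarith
    have hfreq' : ∃ᶠ n in Filter.atTop, PhiN y y' (n+1) s < ε/4 := by
      rw [Filter.frequently_atTop] at hfreq ⊢
      intro M'
      obtain ⟨qq, hq1, hq2⟩ := hfreq (M'+1)
      exact ⟨qq - 1, by omega, by rwa [Nat.sub_add_cancel (by omega)]⟩
    set M₀ := Nat.ceil ((4*(L:ℝ)+8)/ε) with hM₀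
    have hall := hfreq'.and_eventually ((ev_c_le_a D hD y).and
        (Filter.eventually_ge_atTop (max M M₀)))
    obtain ⟨n, hPhi, hcn, hnM⟩ := hall.exists
    set a := (D.A y n).length with hadef
    set c := (D.C n).length with hcdef
    set q := n + 1 with hqdef
    set K := a^2 with hKdef
    have haN : 1 ≤ a := lenA_pos D y n
    have hKN : 1 ≤ K := Nat.one_le_pow _ _ haN
    refine ⟨a + (c + K*q), ?_, ?_⟩
    · have h1 : q ≤ K*q := Nat.le_mul_of_pos_left q hKN
      have h2 : M ≤ n := le_trans (le_max_left M M₀) hnM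
      omega
    · have hcard := stage_upper D y y' n L s hLs
      rw [← hadef, ← hqdef, ← hcdef, ← hKdef] at hcard
      rw [PhiN_eq] at hPhi ⊢
      set g := (hitSet y y' q s).card with hgdef
      have hq0 : (0:ℝ) < (q:ℝ) := by exact_mod_cast Nat.succ_pos n
      have hgq : (g:ℝ) < ε/4 * q := by
        rw [div_lt_iff₀ hq0] at hPhi
        linarith
      have haR : (1:ℝ) ≤ (a:ℝ) := by exact_mod_cast haN
      have hcR : (c:ℝ) ≤ (a:ℝ) := by exact_mod_cast hcn
      have hM₀n : (M₀:ℝ) ≤ (n:ℝ) := by exact_mod_cast le_trans (le_max_right M M₀) hnM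
      have hLq : 4*(L:ℝ) + 8 ≤ ε*q := by
        have h1 : (4*(L:ℝ)+8)/ε ≤ (M₀:ℝ) := Nat.le_ceil _
        rw [div_le_iff₀ hε] at h1
        rw [mul_comm] at h1
        have h2 : (M₀:ℝ) ≤ (q:ℝ) := by
          have : (n:ℝ) ≤ (q:ℝ) := by exact_mod_cast Nat.le_succ n
          linarith
        have h3 : ε*(M₀:ℝ) ≤ ε*(q:ℝ) := mul_le_mul_of_nonneg_left h2 hε.le
        linarith
      have hcardR : ((hitSet (D.T y) (D.T y') (a + (c + K*q)) ((1/2)^L)).card : ℝ)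
          ≤ ((a:ℝ) + c) + L + (a:ℝ)^2 * ((g:ℝ) + L) := by
        calc ((hitSet (D.T y) (D.T y') (a + (c + K*q)) ((1/2)^L)).card : ℝ)
            ≤ (((a + c) + L + K * (g + L) : ℕ) : ℝ) := by exact_mod_cast hcard
          _ = ((a:ℝ) + c) + L + (a:ℝ)^2 * ((g:ℝ) + L) := by push_cast [hKdef]; ring
      have hNpos : (0:ℝ) < ((a + (c + K*q) : ℕ) : ℝ) := by
        have : 0 < a + (c + K*q) := by omega
        exact_mod_cast this
      rw [div_le_iff₀ hNpos]
      have hKqN : (a:ℝ)^2*(q:ℝ) ≤ ((a + (c + K*q) : ℕ) : ℝ) := by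
        push_cast [hKdef]
        have h0c : (0:ℝ) ≤ (c:ℝ) := Nat.cast_nonneg c
        linarith
      have hLeps : (L:ℝ) ≤ ε/4*q := by linarith
      have h2eps : (2:ℝ) ≤ ε/4*q := by linarith
      have hK1R : (1:ℝ) ≤ (a:ℝ)^2 := by nlinarith
      have e1 : (a:ℝ)^2*(g:ℝ) ≤ (a:ℝ)^2*(ε/4*q) := by
        apply mul_le_mul_of_nonneg_left hgq.le (by positivity)
      have e2 : (a:ℝ)^2*(L:ℝ) ≤ (a:ℝ)^2*(ε/4*q) := by
        apply mul_le_mul_of_nonneg_left hLeps (by positivity)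
      have e3 : (L:ℝ) ≤ (a:ℝ)^2*(ε/4*q) :=
        le_trans hLeps (le_mul_of_one_le_left (by positivity) hK1R)
      have e5 : (2:ℝ)*(a:ℝ) ≤ (a:ℝ)^2*(ε/4*q) := by
        nlinarith [mul_le_mul_of_nonneg_left h2eps (by positivity : (0:ℝ) ≤ (a:ℝ)^2),
          sq_nonneg ((a:ℝ) - 1), haR]
      have efin : ((a:ℝ) + c) + L + (a:ℝ)^2 * ((g:ℝ) + L) ≤ ε*((a:ℝ)^2*q) := by
        nlinarith [e1, e2, e3, e5, hcR]
      calc ((hitSet (D.T y) (D.T y') (a + (c + K*q)) ((1/2)^L)).card : ℝ)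
          ≤ ((a:ℝ) + c) + L + (a:ℝ)^2 * ((g:ℝ) + L) := hcardR
        _ ≤ ε*((a:ℝ)^2*q) := efin
        _ ≤ ε*((a + (c + K*q) : ℕ) : ℝ) := mul_le_mul_of_nonneg_left hKqN hε.le
  have hfin : Filter.liminf (fun N => PhiN (D.T y) (D.T y') N ((1/2)^L)) Filter.atTop ≤ 0 := by
    by_contra hpos
    push_neg at hpos
    have h2 := hle (Filter.liminf (fun N => PhiN (D.T y) (D.T y') N ((1/2)^L)) Filter.atTop / 2)
      (by linarith)
    linarith
  exact le_antisymm hfin hge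

set_option maxHeartbeats 2000000 in
lemma keyB (hD : D.Small) (y y' : ℕ → Fin k) (t : ℝ) (L : ℕ) (hLt : (1/2:ℝ)^L < t)
    (hsup : Filter.limsup (fun m => PhiN y y' m ((1/2)^L)) Filter.atTop = 1) :
    Filter.limsup (fun N => PhiN (D.T y) (D.T y') N t) Filter.atTop = 1 := by
  have hub : Filter.limsup (fun N => PhiN (D.T y) (D.T y') N t) Filter.atTop ≤ 1 :=
    limsup_le_of_le ((PhiN_bddBelow _ _ _).isCoboundedUnder_le)
      (Filter.Eventually.of_forall (fun N => PhiN_le_one _ _ _ _))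
  have hlb : ∀ ε > (0:ℝ),
      1 - ε ≤ Filter.limsup (fun N => PhiN (D.T y) (D.T y') N t) Filter.atTop := by
    intro ε hε
    by_cases hε1 : 1 ≤ ε
    · apply le_limsup_of_frequently_le _ (PhiN_bddAbove _ _ _)
      apply Filter.Frequently.of_forall
      intro N
      have := PhiN_nonneg (D.T y) (D.T y') N t
      linarith
    push_neg at hε1
    apply le_limsup_of_frequently_le _ (PhiN_bddAbove _ _ _)
    rw [Filter.frequently_atTop]
    intro M
    have hfreq : ∃ᶠ m in Filter.atTop, 1 - ε/8 < PhiN y y' m ((1/2)^L) := by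
      apply frequently_lt_of_lt_limsup ((PhiN_bddBelow y y' _).isCoboundedUnder_le)
      rw [hsup]
      linarith
    have hfreq' : ∃ᶠ n in Filter.atTop, 1 - ε/8 < PhiN y y' (n+1) ((1/2)^L) := by
      rw [Filter.frequently_atTop] at hfreq ⊢
      intro M'
      obtain ⟨qq, hq1, hq2⟩ := hfreq (M'+1)
      exact ⟨qq - 1, by omega, by rwa [Nat.sub_add_cancel (by omega)]⟩
    set M₀ := Nat.ceil ((4*(L:ℝ)+8)/ε) with hM₀
    have hall := hfreq'.and_eventually ((ev_c_le_a D hD y).and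
        (Filter.eventually_ge_atTop (max M M₀)))
    obtain ⟨n, hPhi, hcn, hnM⟩ := hall.exists
    set a := (D.A y n).length with hadef
    set c := (D.C n).length with hcdef
    set q := n + 1 with hqdef
    set K := a^2 with hKdef
    have haN : 1 ≤ a := lenA_pos D y n
    have hKN : 1 ≤ K := Nat.one_le_pow _ _ haN
    refine ⟨a + (c + K*q), ?_, ?_⟩
    · have h1 : q ≤ K*q := Nat.le_mul_of_pos_left q hKN
      have h2 : M ≤ n := le_trans (le_max_left M M₀) hnM
      omega
    · have hcard := stage_lower D y y' n L t hLt
      rw [← hadef, ← hqdef, ← hcdef, ← hKdef] at hcard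
      have hGle := G_card_le y y' q L ((1/2:ℝ)^L)
      rw [PhiN_eq] at hPhi ⊢
      classical
      set g := (hitSet y y' q ((1/2:ℝ)^L)).card with hgdef
      set g' := ((Finset.range (q - L)).filter
          (fun r => shiftDist (shift^[r] y) (shift^[r] y') < (1/2:ℝ)^L)).card with hg'def
      have hq0 : (0:ℝ) < (q:ℝ) := by exact_mod_cast Nat.succ_pos n
      have hgq : (1 - ε/8) * (q:ℝ) < (g:ℝ) := by
        rw [lt_div_iff₀ hq0] at hPhi
        linarith
      have haR : (1:ℝ) ≤ (a:ℝ) := by exact_mod_cast haN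
      have hcR : (c:ℝ) ≤ (a:ℝ) := by exact_mod_cast hcn
      have hnaR : (n:ℝ) ≤ (a:ℝ) := by exact_mod_cast lenA_ge' D y n
      have hM₀n : (M₀:ℝ) ≤ (n:ℝ) := by exact_mod_cast le_trans (le_max_right M M₀) hnM
      have hLq : 4*(L:ℝ) + 8 ≤ ε*q := by
        have h1 : (4*(L:ℝ)+8)/ε ≤ (M₀:ℝ) := Nat.le_ceil _
        rw [div_le_iff₀ hε] at h1
        rw [mul_comm] at h1
        have h2 : (M₀:ℝ) ≤ (q:ℝ) := by
          have : (n:ℝ) ≤ (q:ℝ) := by exact_mod_cast Nat.le_succ n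
          linarith
        have h3 : ε*(M₀:ℝ) ≤ ε*(q:ℝ) := mul_le_mul_of_nonneg_left h2 hε.le
        linarith
      have h4a : (4:ℝ) ≤ ε*(a:ℝ) := by
        have h2 : (M₀:ℝ) ≤ (a:ℝ) := le_trans hM₀n hnaR
        have h1 : (4*(L:ℝ)+8)/ε ≤ (M₀:ℝ) := Nat.le_ceil _
        rw [div_le_iff₀ hε] at h1
        rw [mul_comm] at h1
        have h3 : ε*(M₀:ℝ) ≤ ε*(a:ℝ) := mul_le_mul_of_nonneg_left h2 hε.le
        have hL0 : (0:ℝ) ≤ (L:ℝ) := Nat.cast_nonneg L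
        linarith
      have hg'R : (g:ℝ) - L ≤ (g':ℝ) := by
        have : (g:ℝ) ≤ (g':ℝ) + L := by exact_mod_cast hGle
        linarith
      have hcardR : ((a:ℝ)^2 - 1) * (g':ℝ)
          ≤ ((hitSet (D.T y) (D.T y') (a + (c + K*q)) t).card : ℝ) := by
        calc ((a:ℝ)^2 - 1) * (g':ℝ) = (((K - 1) : ℕ) : ℝ) * (g':ℝ) := by
              rw [Nat.cast_sub hKN]
              push_cast [hKdef]
              ring
          _ = (((K - 1) * g' : ℕ) : ℝ) := by push_cast; ring
          _ ≤ _ := by exact_mod_cast hcard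
      have hNpos : (0:ℝ) < ((a + (c + K*q) : ℕ) : ℝ) := by
        have : 0 < a + (c + K*q) := by omega
        exact_mod_cast this
      rw [le_div_iff₀ hNpos]
      -- key inequality
      have hNval : ((a + (c + K*q) : ℕ) : ℝ) = (a:ℝ) + ((c:ℝ) + (a:ℝ)^2*(q:ℝ)) := by
        push_cast [hKdef]; ring
      have hL0 : (0:ℝ) ≤ (L:ℝ) := Nat.cast_nonneg L
      have hLeps : (L:ℝ) ≤ ε/4*q := by linarith
      have h2eps : (2:ℝ) ≤ ε/4*q := by linarith
      have hK1R : (1:ℝ) ≤ (a:ℝ)^2 := by nlinarith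
      have e5 : (2:ℝ)*(a:ℝ) ≤ (a:ℝ)^2*(ε/4*q) := by
        nlinarith [mul_le_mul_of_nonneg_left h2eps (by positivity : (0:ℝ) ≤ (a:ℝ)^2),
          sq_nonneg ((a:ℝ) - 1), haR]
      have e2 : (a:ℝ)^2*(L:ℝ) ≤ (a:ℝ)^2*(ε/4*q) := by
        apply mul_le_mul_of_nonneg_left hLeps (by positivity)
      have e4 : (q:ℝ) ≤ (a:ℝ)^2*(ε/4*q) := by
        have h1 : (4:ℝ) ≤ ε*(a:ℝ)^2 := by nlinarith
        nlinarith
      have f1 : ((a:ℝ)^2 - 1) * ((1 - ε/8)*q - L) ≤ ((a:ℝ)^2 - 1) * (g':ℝ) := by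
        apply mul_le_mul_of_nonneg_left _ (by linarith)
        linarith
      have main : (1-ε)*((a:ℝ) + ((c:ℝ) + (a:ℝ)^2*(q:ℝ)))
          ≤ ((a:ℝ)^2 - 1) * ((1 - ε/8)*q - L) := by
        have h0c : (0:ℝ) ≤ (c:ℝ) := Nat.cast_nonneg c
        nlinarith [e5, e2, e4, hcR, haR, hq0, hε.le, hL0,
          mul_nonneg hε.le h0c, mul_nonneg hε.le (by linarith : (0:ℝ) ≤ (a:ℝ))]
      calc (1-ε)*((a + (c + K*q) : ℕ) : ℝ)
          = (1-ε)*((a:ℝ) + ((c:ℝ) + (a:ℝ)^2*(q:ℝ))) := by rw [hNval]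
        _ ≤ ((a:ℝ)^2 - 1) * ((1 - ε/8)*q - L) := main
        _ ≤ ((a:ℝ)^2 - 1) * (g':ℝ) := f1
        _ ≤ _ := hcardR
  have hfin : 1 ≤ Filter.limsup (fun N => PhiN (D.T y) (D.T y') N t) Filter.atTop := by
    by_contra hlt
    push_neg at hlt
    have h2 := hlb ((1 - Filter.limsup (fun N => PhiN (D.T y) (D.T y') N t) Filter.atTop)/2)
      (by linarith)
    linarith
  exact le_antisymm hub hfin

lemma main_pair (hD : D.Small) (y y' : ℕ → Fin k) (h : DC1Pair y y') :
    DC1Pair (D.T y) (D.T y') := by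
  obtain ⟨⟨s, hs, hlim⟩, hsup⟩ := h
  constructor
  · exact keyA D hD y y' s hs hlim
  · intro t ht
    obtain ⟨L, hLt⟩ := exists_pow_lt_of_lt_one ht (by norm_num : (1/2:ℝ) < 1)
    exact keyB D hD y y' t L hLt (hsup _ (by positivity))

end Key

section Final

open Filter Topology

lemma DC1Pair_ne {k : ℕ} {u v : ℕ → Fin k} (h : DC1Pair u v) : u ≠ v := by
  rintro rfl
  obtain ⟨⟨s, hs, h0⟩, -⟩ := h
  have hev : ∀ᶠ n in Filter.atTop, PhiN u u n s = 1 := by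
    filter_upwards [Filter.eventually_ge_atTop 1] with n hn
    rw [PhiN_eq]
    have hset : hitSet u u n s = Finset.range n := by
      ext i
      rw [mem_hitSet, Finset.mem_range]
      have hd : shiftDist (shift^[i] u) (shift^[i] u) = 0 := sd_self _
      constructor
      · exact And.left
      · intro hi
        exact ⟨hi, by rw [hd]; exact hs⟩
    have hn0 : ((n:ℝ)) ≠ 0 := by
      have : (0:ℝ) < (n:ℝ) := by exact_mod_cast hn
      linarith
    rw [hset, Finset.card_range, div_self hn0]
  have hone : Filter.liminf (fun n => PhiN u u n s) Filter.atTop = 1 := by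
    rw [Filter.liminf_congr hev]
    exact Filter.liminf_const 1
  rw [h0] at hone
  norm_num at hone

end Final

/-- **Proposition.** For a proper subshift `P ⊊ Σ_k` and the map `T` constructed from `P`,
`T` maps DC1 pairs of points of `P` to DC1 pairs; consequently `T` maps any
DC1-scrambled subset of `P` to a DC1-scrambled subset of `Σ_k`. -/
theorem T_preserves_DC1 (k : ℕ) (hk : 2 ≤ k)
    (P : Set (ℕ → Fin k)) (hP : IsSubshift P) (hproper : P ≠ Set.univ)
    (D : TData k P) (hD : D.Small) :
    (∀ y ∈ P, ∀ y' ∈ P, DC1Pair y y' → DC1Pair (D.T y) (D.T y')) ∧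
    (∀ S ⊆ P, DC1Scrambled S → DC1Scrambled (D.T '' S)) := by
  constructor
  · intro y _ y' _ hpair
    exact main_pair D hD y y' hpair
  · intro S _ hscr
    obtain ⟨hnt, hpairs⟩ := hscr
    constructor
    · obtain ⟨u, hu, v, hv, huv⟩ := hnt
      exact ⟨D.T u, ⟨u, hu, rfl⟩, D.T v, ⟨v, hv, rfl⟩,
        DC1Pair_ne (main_pair D hD u v (hpairs u hu v hv huv))⟩
    · rintro x ⟨u, hu, rfl⟩ x' ⟨v, hv, rfl⟩ hne
      have huv : u ≠ v := by rintro rfl; exact hne rfl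
      exact main_pair D hD u v (hpairs u hu v hv huv)
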